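/- Let s ∈ {A,B}^ω be a balanced word with f_A(s) > 1/2, and let (𝒜, ℱ) be a subshift of finite type on ℤ^d whose forbidden patterns are nonempty. Then player A has a winning strategy in the non-alternating Domino game Γ_s(𝒜, ℱ, ℤ^d) if and only if ℱ ≠ ∅. Consequently NAGAME_s(ℤ^d) is decidable for such s. -/

import Mathlib

open Filter Topology

attribute [local instance] Classical.propDecidable

/-- The two players. -/
inductive Player | A | B
deriving DecidableEq

/-- A cell of the grid `ℤ^d`. -/
abbrev Cell (d : ℕ) := Fin d → ℤ

/-- A (possibly partial) colouring of the grid: `none` means uncoloured.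
Colours are natural numbers; the alphabet of size `m` is `{0, …, m-1}`. -/
abbrev Board (d : ℕ) := Cell d → Option ℕ

/-- A finite pattern, encoded as a list of tiles (cell, colour). -/
abbrev PatternCode (d : ℕ) := List (Cell d × ℕ)

/-- A move: `none` is a pass, `some (i, a)` colours cell `i` with colour `a`. -/
abbrev MoveD (d : ℕ) := Option (Cell d × ℕ)

/-- Code for an SFT: alphabet size together with the list of forbidden patterns. -/
abbrev SFTCode (d : ℕ) := ℕ × List (PatternCode d)

/-- A (positional) strategy: a move for every position. -/
abbrev Strategy (d : ℕ) := Board d → MoveD d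

def emptyBoard (d : ℕ) : Board d := fun _ => none

/-- The pattern `p` occurs in the board `x` translated by `t`. -/
def occursAt {d : ℕ} (p : PatternCode d) (x : Board d) (t : Cell d) : Prop :=
  ∀ q ∈ p, x (t + q.1) = some q.2

/-- A position is final when a translate of some forbidden pattern occurs. -/
def isFinal {d : ℕ} (F : List (PatternCode d)) (x : Board d) : Prop :=
  ∃ p ∈ F, ∃ t : Cell d, occursAt p x t

/-- Legality of a move in the game with alphabet `{0,…,m-1}` played on `E`:
a pass is always legal, and a colouring move must pick an uncoloured cell of `E`
and a colour of the alphabet. -/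
def legalMove {d : ℕ} (m : ℕ) (E : Set (Cell d)) (x : Board d) : MoveD d → Prop
  | none => True
  | some (i, a) => i ∈ E ∧ x i = none ∧ a < m

def applyMove {d : ℕ} (x : Board d) : MoveD d → Board d
  | none => x
  | some (i, a) => Function.update x i (some a)

/-- One step of the game: the move proposed by the strategy is played if legal
(an illegal move is treated as a pass). -/
noncomputable def step {d : ℕ} (m : ℕ) (E : Set (Cell d)) (st : Strategy d)
    (x : Board d) : Board d :=
  if legalMove m E x (st x) then applyMove x (st x) else x

/-- The play generated by strategies `stA`, `stB` with turn order `s`,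
starting from the empty board. -/
noncomputable def play {d : ℕ} (m : ℕ) (E : Set (Cell d)) (s : ℕ → Player)
    (stA stB : Strategy d) : ℕ → Board d
  | 0 => emptyBoard d
  | t + 1 => step m E (match s t with | .A => stA | .B => stB) (play m E s stA stB t)

/-- The alternating turn order: `A` plays first. -/
def alt : ℕ → Player := fun t => if t % 2 = 0 then .A else .B

/-- Player `A` has a winning strategy in the Domino game with turn order `s`:
a final position is eventually reached whatever `B` plays. -/
def AWins {d : ℕ} (m : ℕ) (F : List (PatternCode d)) (E : Set (Cell d))
    (s : ℕ → Player) : Prop :=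
  ∃ stA : Strategy d, ∀ stB : Strategy d, ∃ t : ℕ, isFinal F (play m E s stA stB t)

/-- Player `B` has a winning strategy in the Domino game with turn order `s`:
a final position is never reached whatever `A` plays. -/
def BWins {d : ℕ} (m : ℕ) (F : List (PatternCode d)) (E : Set (Cell d))
    (s : ℕ → Player) : Prop :=
  ∃ stB : Strategy d, ∀ stA : Strategy d, ∀ t : ℕ, ¬ isFinal F (play m E s stA stB t)

/-- The Domino game problem on `ℤ^d` (alternating turn order, `A` first). -/
def DGame (d : ℕ) : SFTCode d → Prop :=
  fun c => AWins c.1 c.2 Set.univ alt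

/-- The number of occurrences of the letter `A` in the factor `s_{⟦i, i+n⟧}`. -/
def countA (s : ℕ → Player) (i n : ℕ) : ℕ :=
  ((Finset.range (n + 1)).filter (fun l => s (i + l) = Player.A)).card

/-- The word `s` is balanced: any two factors of the same length have numbers of
occurrences of `A` differing by at most 1. -/
def BalancedWord (s : ℕ → Player) : Prop :=
  ∀ i j n : ℕ, ((countA s i n : ℤ) - (countA s j n : ℤ)).natAbs ≤ 1

/-- The non-alternating Domino game problem on `ℤ^d` with turn order `s`. -/
def NAGame (d : ℕ) (s : ℕ → Player) : SFTCode d → Prop :=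
  fun c => AWins c.1 c.2 Set.univ s

/-!
Player `A` plays on `N` pairwise disjoint translates ("slots") of a forbidden pattern `p` in
which no cell carries two colours. It always colours correctly a missing tile of a clean slot
(one showing no wrong colour) of least height (number of correct tiles). A move of `A` keeps
every clean slot clean, a move of `B` spoils at most one. As `s` is balanced with frequency
above `1/2`, for some `w` every window of `w` turns contains `a > w/2` turns of `A`. Raising the
`n` clean slots of least height `h` to height `h + 1` takes `n / a + 1` such windows, during
which at least `n / a - a` clean slots survive. After `|p|` phases a clean slot is left if `N`
is large enough, and it is then complete.
-/

namespace NonAlternatingDomino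

section Turns

variable (s : ℕ → Player)

def numTurns (P : Player) (T ℓ : ℕ) : ℕ :=
  ((Finset.range ℓ).filter fun l => s (T + l) = P).card

lemma numTurns_succ (P : Player) (T ℓ : ℕ) :
    numTurns s P T (ℓ + 1) = numTurns s P T ℓ + if s (T + ℓ) = P then 1 else 0 := by
  simp only [numTurns, Finset.card_filter, Finset.sum_range_succ]

lemma numTurns_add (P : Player) (T u v : ℕ) :
    numTurns s P T (u + v) = numTurns s P T u + numTurns s P (T + u) v := by
  simp only [numTurns, Finset.card_filter, Finset.sum_range_add, add_assoc]

lemma numTurns_A_add_numTurns_B (T ℓ : ℕ) : numTurns s .A T ℓ + numTurns s .B T ℓ = ℓ := by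
  have hB : ∀ l, s (T + l) = .B ↔ ¬ s (T + l) = .A := fun l => by cases s (T + l) <;> simp
  simp only [numTurns, hB]
  rw [Finset.card_filter_add_card_filter_not, Finset.card_range]

lemma mul_le_numTurns {P : Player} {w a : ℕ} (hwin : ∀ T, a ≤ numTurns s P T w) (T q : ℕ) :
    q * a ≤ numTurns s P T (q * w) := by
  induction q with
  | zero => simp
  | succ q ih =>
    rw [Nat.succ_mul, Nat.succ_mul, numTurns_add]
    have := hwin (T + q * w)
    omega

lemma numTurns_B_le {w a : ℕ} (hwin : ∀ T, a ≤ numTurns s .A T w) (T q : ℕ) :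
    numTurns s .B T (q * w) ≤ q * (w - a) := by
  have := numTurns_A_add_numTurns_B s T (q * w)
  have := mul_le_numTurns s hwin T q
  rw [Nat.mul_sub]
  omega

end Turns

section Frequency

variable {s : ℕ → Player} {L : ℝ}

lemma numTurns_A_le_add_one (hbal : BalancedWord s) (i j ℓ : ℕ) :
    numTurns s .A i ℓ ≤ numTurns s .A j ℓ + 1 := by
  cases ℓ with
  | zero => simp [numTurns]
  | succ n =>
    have := hbal i j n
    change countA s i n ≤ countA s j n + 1
    omega

lemma tendsto_numTurns_A_div
    (hfreq : Tendsto (fun n : ℕ => (countA s 0 n : ℝ) / (n + 1)) atTop (𝓝 L)) :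
    Tendsto (fun ℓ : ℕ => (numTurns s .A 0 ℓ : ℝ) / ℓ) atTop (𝓝 L) := by
  rw [← tendsto_add_atTop_iff_nat 1]
  simpa [numTurns, countA] using hfreq

-- Balance makes `ℓ ↦ numTurns s .A 0 ℓ + 1` subadditive, so `L ≤ (numTurns s .A 0 ℓ + 1) / ℓ`.
lemma le_numTurns_A_zero (hbal : BalancedWord s)
    (hfreq : Tendsto (fun n : ℕ => (countA s 0 n : ℝ) / (n + 1)) atTop (𝓝 L)) (ℓ : ℕ) :
    L * ℓ - 1 ≤ numTurns s .A 0 ℓ := by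
  rcases Nat.eq_zero_or_pos ℓ with rfl | hℓ
  · simp [numTurns]
  set f := numTurns s .A 0 ℓ
  have hblocks : ∀ q, numTurns s .A 0 (q * ℓ) ≤ q * (f + 1) := by
    intro q
    induction q with
    | zero => simp [numTurns]
    | succ q ih =>
      rw [Nat.succ_mul, Nat.succ_mul, numTurns_add]
      have := numTurns_A_le_add_one hbal (0 + q * ℓ) 0 ℓ
      omega
  have hlim := (tendsto_numTurns_A_div hfreq).comp
    (tendsto_atTop_mono (fun q => Nat.le_mul_of_pos_right q hℓ) tendsto_id)
  have hL : L ≤ (f + 1) / ℓ := by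
    refine le_of_tendsto hlim (Eventually.of_forall fun q => ?_)
    rcases Nat.eq_zero_or_pos q with rfl | hq
    · simp only [Function.comp_apply, zero_mul, Nat.cast_zero, div_zero]
      positivity
    calc (numTurns s .A 0 (q * ℓ) : ℝ) / ((q * ℓ : ℕ) : ℝ)
        ≤ (q * (f + 1) : ℝ) / (q * ℓ) := by push_cast; gcongr; exact_mod_cast hblocks q
      _ = (f + 1) / ℓ := mul_div_mul_left _ _ (by positivity)
  rw [le_div_iff₀ (by positivity)] at hL
  linarith

theorem exists_window_numTurns_A (hbal : BalancedWord s)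
    (hfreq : Tendsto (fun n : ℕ => (countA s 0 n : ℝ) / (n + 1)) atTop (𝓝 L)) (hL : 1 / 2 < L) :
    ∃ w a : ℕ, w < 2 * a ∧ ∀ T, a ≤ numTurns s .A T w := by
  obtain ⟨w, hw⟩ := exists_nat_gt (2 / (L - 1 / 2))
  refine ⟨w, numTurns s .A 0 w - 1, ?_, fun T => ?_⟩
  · have hlow := le_numTurns_A_zero hbal hfreq w
    rw [div_lt_iff₀ (by linarith)] at hw
    have : (w : ℝ) + 2 < 2 * numTurns s .A 0 w := by linarith
    have : w + 2 < 2 * numTurns s .A 0 w := by exact_mod_cast this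
    omega
  · have := numTurns_A_le_add_one hbal 0 T w
    omega

end Frequency

section Play

variable {d : ℕ}

def Extends (x y : Board d) : Prop := ∀ c a, x c = some a → y c = some a

lemma Extends.trans {x y z : Board d} (hxy : Extends x y) (hyz : Extends y z) : Extends x z :=
  fun c a h => hyz c a (hxy c a h)

lemma extends_update {x : Board d} {c : Cell d} (hc : x c = none) (a : ℕ) :
    Extends x (Function.update x c (some a)) := by
  intro c' b hb
  rw [Function.update_of_ne]
  · exact hb
  · rintro rfl
    simp [hc] at hb

lemma step_eq_or (m : ℕ) (E : Set (Cell d)) (st : Strategy d) (x : Board d) :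
    step m E st x = x ∨
      ∃ c a, x c = none ∧ a < m ∧ step m E st x = Function.update x c (some a) := by
  unfold step
  split_ifs with hlegal
  · rcases hst : st x with _ | ⟨c, a⟩
    · exact Or.inl rfl
    · rw [hst] at hlegal
      exact Or.inr ⟨c, a, hlegal.2.1, hlegal.2.2, rfl⟩
  · exact Or.inl rfl

lemma extends_step (m : ℕ) (E : Set (Cell d)) (st : Strategy d) (x : Board d) :
    Extends x (step m E st x) := by
  rcases step_eq_or m E st x with h | ⟨c, a, hc, -, h⟩ <;> rw [h]
  · exact fun _ _ => id
  · exact extends_update hc a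

variable (m : ℕ) (E : Set (Cell d)) (s : ℕ → Player) (stA stB : Strategy d)

lemma play_succ_of_eq_A {t : ℕ} (h : s t = .A) :
    play m E s stA stB (t + 1) = step m E stA (play m E s stA stB t) := by
  rw [play, h]

lemma play_succ_of_eq_B {t : ℕ} (h : s t = .B) :
    play m E s stA stB (t + 1) = step m E stB (play m E s stA stB t) := by
  rw [play, h]

lemma play_extends {t t' : ℕ} (h : t ≤ t') :
    Extends (play m E s stA stB t) (play m E s stA stB t') := by
  induction t', h using Nat.le_induction with
  | base => exact fun _ _ => id
  | succ t' _ ih => exact ih.trans (extends_step m E _ _)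

lemma play_colour_lt (t : ℕ) (c : Cell d) (a : ℕ) (h : play m E s stA stB t c = some a) :
    a < m := by
  induction t generalizing c a with
  | zero => simp [play, emptyBoard] at h
  | succ t ih =>
    rcases step_eq_or m E _ (play m E s stA stB t) with hst | ⟨c', a', -, ha', hst⟩ <;>
      rw [play, hst] at h
    · exact ih c a h
    · rcases eq_or_ne c c' with rfl | hne
      · simp only [Function.update_self, Option.some.injEq] at h
        exact h ▸ ha'
      · rw [Function.update_of_ne hne] at h
        exact ih c a h

end Play

section Slots

variable {d : ℕ} (p : PatternCode d) (base : ℕ → Cell d)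

def IsConsistent : Prop := ∀ q ∈ p, ∀ q' ∈ p, q.1 = q'.1 → q.2 = q'.2

def DisjointTranslates : Prop :=
  ∀ j j' : ℕ, ∀ q ∈ p, ∀ q' ∈ p, base j + q.1 = base j' + q'.1 → j = j'

lemma exists_disjointTranslates (i₀ : Fin d) :
    ∃ base : ℕ → Cell d, DisjointTranslates p base := by
  set R : ℕ := p.toFinset.sup fun q => (q.1 i₀).natAbs
  have hR : ∀ q ∈ p, |q.1 i₀| ≤ R := fun q hq => by
    rw [Int.abs_eq_natAbs, Nat.cast_le]
    exact Finset.le_sup (f := fun q : Cell d × ℕ => (q.1 i₀).natAbs) (List.mem_toFinset.mpr hq)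
  refine ⟨fun j => Pi.single i₀ ((j : ℤ) * (2 * R + 1)), fun j j' q hq q' hq' h => ?_⟩
  have h₀ := congrFun h i₀
  simp only [Pi.add_apply, Pi.single_eq_same] at h₀
  have hdiff : ((j : ℤ) - j') * (2 * R + 1) = 0 := by
    refine Int.eq_zero_of_abs_lt_dvd (dvd_mul_left _ _) ?_
    rw [show ((j : ℤ) - j') * (2 * R + 1) = q'.1 i₀ - q.1 i₀ by linarith]
    linarith [abs_sub (q'.1 i₀) (q.1 i₀), hR q hq, hR q' hq']
  have := (mul_eq_zero.mp hdiff).resolve_right (by positivity)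
  omega

-- Slot `j` of a board is the translate of `p` by `base j`.
def IsClean (j : ℕ) (x : Board d) : Prop :=
  ∀ q ∈ p, ∀ a, x (base j + q.1) = some a → a = q.2

noncomputable def height (j : ℕ) (x : Board d) : ℕ :=
  (p.toFinset.filter fun q => x (base j + q.1) = some q.2).card

noncomputable def cleanSlots (N : ℕ) (x : Board d) : Finset ℕ :=
  (Finset.range N).filter fun j => IsClean p base j x

variable {p base}

lemma mem_cleanSlots {N j : ℕ} {x : Board d} :
    j ∈ cleanSlots p base N x ↔ j < N ∧ IsClean p base j x := by
  rw [cleanSlots, Finset.mem_filter, Finset.mem_range]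

lemma cleanSlots_emptyBoard (N : ℕ) : cleanSlots p base N (emptyBoard d) = Finset.range N :=
  Finset.filter_true_of_mem fun _ _ _ _ _ h => by simp [emptyBoard] at h

lemma IsClean.of_extends {j : ℕ} {x y : Board d} (hxy : Extends x y) (h : IsClean p base j y) :
    IsClean p base j x :=
  fun q hq a ha => h q hq a (hxy _ _ ha)

lemma cleanSlots_subset_of_extends {N : ℕ} {x y : Board d} (hxy : Extends x y) :
    cleanSlots p base N y ⊆ cleanSlots p base N x := fun j hj => by
  rw [mem_cleanSlots] at hj ⊢
  exact ⟨hj.1, hj.2.of_extends hxy⟩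

lemma height_le_of_extends {x y : Board d} (hxy : Extends x y) (j : ℕ) :
    height p base j x ≤ height p base j y :=
  Finset.card_le_card fun q hq => by
    rw [Finset.mem_filter] at hq ⊢
    exact ⟨hq.1, hxy _ _ hq.2⟩

lemma height_le_card (j : ℕ) (x : Board d) : height p base j x ≤ p.toFinset.card :=
  Finset.card_filter_le _ _

lemma occursAt_of_height_eq {j : ℕ} {x : Board d} (h : height p base j x = p.toFinset.card) :
    occursAt p x (base j) := fun q hq =>
  Finset.card_filter_eq_iff.mp h q (List.mem_toFinset.mpr hq)

lemma exists_uncoloured {j : ℕ} {x : Board d} (hclean : IsClean p base j x)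
    (hlt : height p base j x < p.toFinset.card) : ∃ q ∈ p, x (base j + q.1) = none := by
  by_contra! hcol
  refine hlt.ne (Finset.card_filter_eq_iff.mpr fun q hq => ?_)
  obtain ⟨a, ha⟩ := Option.ne_none_iff_exists'.mp (hcol q (List.mem_toFinset.mp hq))
  rw [ha, hclean q (List.mem_toFinset.mp hq) a ha]

lemma IsClean.update_of_notMem {j : ℕ} {x : Board d} {c : Cell d} (h : IsClean p base j x)
    (hc : ∀ q ∈ p, base j + q.1 ≠ c) (a : Option ℕ) :
    IsClean p base j (Function.update x c a) :=
  fun q hq b hb => h q hq b (by rwa [Function.update_of_ne (hc q hq)] at hb)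

lemma IsClean.update_correct (hp : IsConsistent p) (hb : DisjointTranslates p base) {j j₀ : ℕ}
    {x : Board d} {q₀ : Cell d × ℕ} (hq₀ : q₀ ∈ p) (h : IsClean p base j x) :
    IsClean p base j (Function.update x (base j₀ + q₀.1) (some q₀.2)) := by
  intro q hq a ha
  by_cases hcell : base j + q.1 = base j₀ + q₀.1
  · obtain rfl := hb j j₀ q hq q₀ hq₀ hcell
    rw [hcell, Function.update_self, Option.some.injEq] at ha
    exact ha ▸ hp q₀ hq₀ q hq (add_left_cancel hcell).symm
  · rw [Function.update_of_ne hcell] at ha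
    exact h q hq a ha

lemma height_update_correct (hp : IsConsistent p) {j : ℕ} {x : Board d} {q₀ : Cell d × ℕ}
    (hq₀ : q₀ ∈ p) (hnone : x (base j + q₀.1) = none) :
    height p base j (Function.update x (base j + q₀.1) (some q₀.2)) = height p base j x + 1 := by
  have hfilter : (p.toFinset.filter fun q =>
        Function.update x (base j + q₀.1) (some q₀.2) (base j + q.1) = some q.2) =
      insert q₀ (p.toFinset.filter fun q => x (base j + q.1) = some q.2) := by
    ext q
    simp only [Finset.mem_insert, Finset.mem_filter, List.mem_toFinset]
    by_cases hcell : q.1 = q₀.1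
    · have hq : q ∈ p → q = q₀ := fun hq => Prod.ext hcell (hp q hq q₀ hq₀ hcell)
      rw [hcell, Function.update_self, hnone]
      grind
    · rw [Function.update_of_ne (by simpa using hcell)]
      grind
  rw [height, hfilter, Finset.card_insert_of_notMem (by simp [hnone])]
  rfl

lemma card_cleanSlots_le_update (hb : DisjointTranslates p base) (N : ℕ) (x : Board d)
    (c : Cell d) (a : Option ℕ) :
    (cleanSlots p base N x).card ≤ (cleanSlots p base N (Function.update x c a)).card + 1 := by
  have hspoilt : ∀ j ∈ cleanSlots p base N x \ cleanSlots p base N (Function.update x c a),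
      ∃ q ∈ p, base j + q.1 = c := by
    intro j hj
    simp only [Finset.mem_sdiff, mem_cleanSlots] at hj
    by_contra! hc
    exact hj.2 ⟨hj.1.1, hj.1.2.update_of_notMem hc a⟩
  have hle : (cleanSlots p base N x \ cleanSlots p base N (Function.update x c a)).card ≤ 1 :=
    Finset.card_le_one.mpr fun j hj j' hj' => by
      obtain ⟨q, hq, rfl⟩ := hspoilt j hj
      obtain ⟨q', hq', hc⟩ := hspoilt j' hj'
      exact hb j j' q hq q' hq' hc.symm
  have := Finset.card_le_card_sdiff_add_card (s := cleanSlots p base N x)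
    (t := cleanSlots p base N (Function.update x c a))
  omega

end Slots

section Strategy

variable {d : ℕ} (p : PatternCode d) (base : ℕ → Cell d) (N : ℕ)

def IsGreedyMove (x : Board d) (mv : Cell d × ℕ) : Prop :=
  ∃ j ∈ cleanSlots p base N x,
    (∀ j' ∈ cleanSlots p base N x, height p base j x ≤ height p base j' x) ∧
    ∃ q ∈ p, x (base j + q.1) = none ∧ mv = (base j + q.1, q.2)

noncomputable def greedyStrategy : Strategy d := fun x =>
  if h : ∃ mv, IsGreedyMove p base N x mv then some h.choose else none

variable {p base N}

lemma exists_isGreedyMove {x : Board d} (hne : (cleanSlots p base N x).Nonempty)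
    (hlt : ∀ j, height p base j x < p.toFinset.card) : ∃ mv, IsGreedyMove p base N x mv := by
  obtain ⟨j, hj, hmin⟩ := Finset.exists_min_image _ (fun j => height p base j x) hne
  obtain ⟨q, hq, hnone⟩ := exists_uncoloured (mem_cleanSlots.mp hj).2 (hlt j)
  exact ⟨_, j, hj, hmin, q, hq, hnone, rfl⟩

lemma isGreedyMove_of_greedyStrategy_eq_some {x : Board d} {mv : Cell d × ℕ}
    (h : greedyStrategy p base N x = some mv) : IsGreedyMove p base N x mv := by
  unfold greedyStrategy at h
  split_ifs at h with hex
  exact Option.some.inj h ▸ hex.choose_spec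

lemma greedyStrategy_eq_some {x : Board d} (h : ∃ mv, IsGreedyMove p base N x mv) :
    ∃ mv, IsGreedyMove p base N x mv ∧ greedyStrategy p base N x = some mv :=
  ⟨h.choose, h.choose_spec, dif_pos h⟩

variable (m : ℕ)

lemma cleanSlots_subset_step_greedy (hp : IsConsistent p) (hb : DisjointTranslates p base)
    (x : Board d) :
    cleanSlots p base N x ⊆
      cleanSlots p base N (step m Set.univ (greedyStrategy p base N) x) := by
  intro j hj
  rw [mem_cleanSlots] at hj ⊢
  refine ⟨hj.1, ?_⟩
  unfold step
  split_ifs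
  · rcases hmv : greedyStrategy p base N x with _ | mv
    · exact hj.2
    · obtain ⟨-, -, -, q, hq, -, rfl⟩ := isGreedyMove_of_greedyStrategy_eq_some hmv
      exact hj.2.update_correct hp hb hq
  · exact hj.2

lemma card_cleanSlots_le_step (hb : DisjointTranslates p base) (st : Strategy d) (x : Board d) :
    (cleanSlots p base N x).card ≤ (cleanSlots p base N (step m Set.univ st x)).card + 1 := by
  rcases step_eq_or m Set.univ st x with h | ⟨c, a, -, -, h⟩ <;> rw [h]
  · exact Nat.le_succ _
  · exact card_cleanSlots_le_update hb N x c (some a)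

lemma exists_height_step_greedy (hp : IsConsistent p) (hcol : ∀ q ∈ p, q.2 < m) {x : Board d}
    (hne : (cleanSlots p base N x).Nonempty) (hlt : ∀ j, height p base j x < p.toFinset.card) :
    ∃ j ∈ cleanSlots p base N x,
      (∀ j' ∈ cleanSlots p base N x, height p base j x ≤ height p base j' x) ∧
      height p base j (step m Set.univ (greedyStrategy p base N) x) = height p base j x + 1 := by
  obtain ⟨_, ⟨j, hj, hmin, q, hq, hnone, rfl⟩, h⟩ :=
    greedyStrategy_eq_some (exists_isGreedyMove hne hlt)
  refine ⟨j, hj, hmin, ?_⟩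
  have hlegal : legalMove m Set.univ x (greedyStrategy p base N x) := by
    rw [h]
    exact ⟨Set.mem_univ _, hnone, hcol q hq⟩
  rw [step, if_pos hlegal, h]
  exact height_update_correct hp hq hnone

end Strategy

section Levels

variable {d : ℕ} (p : PatternCode d) (base : ℕ → Cell d) (N : ℕ)

def IsAtLevel (h : ℕ) (x : Board d) : Prop :=
  ∀ j ∈ cleanSlots p base N x, h ≤ height p base j x

noncomputable def lowSlots (h : ℕ) (x : Board d) : Finset ℕ :=
  (cleanSlots p base N x).filter fun j => height p base j x ≤ h

variable {p base N}

lemma lowSlots_subset_cleanSlots {h : ℕ} {x : Board d} :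
    lowSlots p base N h x ⊆ cleanSlots p base N x :=
  Finset.filter_subset _ _

lemma IsAtLevel.of_extends {h : ℕ} {x y : Board d} (hxy : Extends x y)
    (hlev : IsAtLevel p base N h x) : IsAtLevel p base N h y := fun j hj =>
  (hlev j (cleanSlots_subset_of_extends hxy hj)).trans (height_le_of_extends hxy j)

lemma lowSlots_subset_of_extends {h : ℕ} {x y : Board d} (hxy : Extends x y) :
    lowSlots p base N h y ⊆ lowSlots p base N h x := fun j hj => by
  rw [lowSlots, Finset.mem_filter] at hj ⊢
  exact ⟨cleanSlots_subset_of_extends hxy hj.1, (height_le_of_extends hxy j).trans hj.2⟩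

-- At level `h` a clean slot of least height has height `h` as soon as some has height `≤ h`,
-- and `A` raises it.
lemma card_lowSlots_step_greedy_lt (m : ℕ) (hp : IsConsistent p) (hcol : ∀ q ∈ p, q.2 < m)
    {h : ℕ} {x : Board d} (hlev : IsAtLevel p base N h x)
    (hlt : ∀ j, height p base j x < p.toFinset.card) (hne : (lowSlots p base N h x).Nonempty) :
    (lowSlots p base N h (step m Set.univ (greedyStrategy p base N) x)).card <
      (lowSlots p base N h x).card := by
  obtain ⟨j₁, hj₁⟩ := hne
  rw [lowSlots, Finset.mem_filter] at hj₁
  obtain ⟨j, hj, hmin, hraise⟩ := exists_height_step_greedy m hp hcol ⟨j₁, hj₁.1⟩ hlt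
  have hjh : height p base j x = h := le_antisymm ((hmin j₁ hj₁.1).trans hj₁.2) (hlev j hj)
  have hjlow : j ∈ lowSlots p base N h x := Finset.mem_filter.mpr ⟨hj, hjh.le⟩
  have hjraised : j ∉ lowSlots p base N h (step m Set.univ (greedyStrategy p base N) x) := by
    simp [lowSlots, hraise, hjh]
  exact Finset.card_lt_card
    ⟨lowSlots_subset_of_extends (extends_step _ _ _ _), fun hsub => hjraised (hsub hjlow)⟩

end Levels

section Phases

variable {d : ℕ} {p : PatternCode d} {base : ℕ → Cell d} {N m : ℕ} {s : ℕ → Player}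
  {stB : Strategy d}

local notation "𝒳" => play m Set.univ s (greedyStrategy p base N) stB

lemma card_cleanSlots_le_play (hp : IsConsistent p) (hb : DisjointTranslates p base) (T u : ℕ) :
    (cleanSlots p base N (𝒳 T)).card ≤
      (cleanSlots p base N (𝒳 (T + u))).card + numTurns s .B T u := by
  induction u with
  | zero => simp [numTurns]
  | succ u ih =>
    rw [numTurns_succ, ← add_assoc T u 1]
    rcases hs : s (T + u) with _ | _
    · have := Finset.card_le_card
        (cleanSlots_subset_step_greedy (N := N) m hp hb (𝒳 (T + u)))
      rw [← play_succ_of_eq_A _ _ _ _ _ hs] at this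
      simp only [reduceCtorEq, if_false]
      omega
    · have := card_cleanSlots_le_step (N := N) m hb stB (𝒳 (T + u))
      rw [← play_succ_of_eq_B _ _ _ _ _ hs] at this
      simp only [if_true]
      omega

lemma card_lowSlots_add_numTurns_le (hp : IsConsistent p) (hcol : ∀ q ∈ p, q.2 < m)
    (hlt : ∀ t j, height p base j (𝒳 t) < p.toFinset.card) {h T : ℕ}
    (hlev : IsAtLevel p base N h (𝒳 T)) (u : ℕ)
    (hne : (lowSlots p base N h (𝒳 (T + u))).Nonempty) :
    (lowSlots p base N h (𝒳 (T + u))).card + numTurns s .A T u ≤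
      (lowSlots p base N h (𝒳 T)).card := by
  induction u with
  | zero => simp [numTurns]
  | succ u ih =>
    have hsub := lowSlots_subset_of_extends (p := p) (base := base) (N := N) (h := h)
      (play_extends m Set.univ s (greedyStrategy p base N) stB (Nat.le_add_right (T + u) 1))
    rw [← add_assoc] at hne ⊢
    have := ih (hne.mono hsub)
    rw [numTurns_succ]
    rcases hs : s (T + u) with _ | _
    · have hdec := card_lowSlots_step_greedy_lt m hp hcol
        (hlev.of_extends (play_extends m Set.univ s _ stB (Nat.le_add_right T u))) (hlt (T + u))
        (hne.mono hsub)
      rw [← play_succ_of_eq_A _ _ _ _ _ hs] at hdec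
      simp only [if_true]
      omega
    · have := Finset.card_le_card hsub
      simp only [reduceCtorEq, if_false]
      omega

lemma isAtLevel_succ (hp : IsConsistent p) (hcol : ∀ q ∈ p, q.2 < m)
    (hlt : ∀ t j, height p base j (𝒳 t) < p.toFinset.card) {h T u : ℕ}
    (hlev : IsAtLevel p base N h (𝒳 T))
    (hturns : (cleanSlots p base N (𝒳 T)).card ≤ numTurns s .A T u) :
    IsAtLevel p base N (h + 1) (𝒳 (T + u)) := by
  intro j hj
  by_contra! hjh
  have hjlow : j ∈ lowSlots p base N h (𝒳 (T + u)) :=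
    Finset.mem_filter.mpr ⟨hj, Nat.le_of_lt_succ hjh⟩
  have := card_lowSlots_add_numTurns_le hp hcol hlt hlev u ⟨j, hjlow⟩
  have := Finset.card_le_card
    (lowSlots_subset_cleanSlots (p := p) (base := base) (N := N) (h := h) (x := 𝒳 T))
  have := Finset.card_pos.mpr ⟨j, hjlow⟩
  omega

lemma exists_isAtLevel_succ (hp : IsConsistent p) (hb : DisjointTranslates p base)
    (hcol : ∀ q ∈ p, q.2 < m) (hlt : ∀ t j, height p base j (𝒳 t) < p.toFinset.card)
    {w a : ℕ} (hwa : w < 2 * a) (hwin : ∀ T, a ≤ numTurns s .A T w) {h T : ℕ}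
    (hlev : IsAtLevel p base N h (𝒳 T)) :
    ∃ T', IsAtLevel p base N (h + 1) (𝒳 T') ∧
      (cleanSlots p base N (𝒳 T)).card / a ≤ (cleanSlots p base N (𝒳 T')).card + a := by
  set n := (cleanSlots p base N (𝒳 T)).card
  set q := n / a + 1
  have hqa : q * a = n / a * a + a := Nat.succ_mul _ _
  have := Nat.div_mul_le_self n a
  have hA := mul_le_numTurns s hwin T q
  have hB := numTurns_B_le s hwin T q
  have hspoilt : q * (w - a) + q ≤ q * a := by
    rw [← Nat.mul_succ]
    exact Nat.mul_le_mul_left q (by omega)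
  -- `q` windows give `A` more than `n` turns and `B` at most `q * (w - a) ≤ n + a - q`.
  refine ⟨T + q * w, isAtLevel_succ hp hcol hlt hlev ?_, ?_⟩
  · have := Nat.lt_div_mul_add (a := n) (b := a) (by omega)
    omega
  · have := card_cleanSlots_le_play (N := N) (s := s) (stB := stB) (m := m) hp hb T (q * w)
    omega

-- If `n ≥ slotBound a (i + 1)`, a phase leaves `n / a - a ≥ slotBound a i` clean slots.
def slotBound (a : ℕ) : ℕ → ℕ
  | 0 => 1
  | i + 1 => a * (slotBound a i + a)

lemma exists_isAtLevel (hp : IsConsistent p) (hb : DisjointTranslates p base)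
    (hcol : ∀ q ∈ p, q.2 < m) (hlt : ∀ t j, height p base j (𝒳 t) < p.toFinset.card)
    {w a : ℕ} (hwa : w < 2 * a) (hwin : ∀ T, a ≤ numTurns s .A T w)
    (hN : slotBound a p.toFinset.card ≤ N) (h : ℕ) (hh : h ≤ p.toFinset.card) :
    ∃ T, IsAtLevel p base N h (𝒳 T) ∧
      slotBound a (p.toFinset.card - h) ≤ (cleanSlots p base N (𝒳 T)).card := by
  induction h with
  | zero =>
    refine ⟨0, fun _ _ => Nat.zero_le _, ?_⟩
    simpa [play, cleanSlots_emptyBoard] using hN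
  | succ h ih =>
    obtain ⟨T, hlev, hcard⟩ := ih (by omega)
    obtain ⟨T', hlev', hcard'⟩ := exists_isAtLevel_succ hp hb hcol hlt hwa hwin hlev
    refine ⟨T', hlev', ?_⟩
    rw [show p.toFinset.card - h = p.toFinset.card - (h + 1) + 1 by omega, slotBound,
      mul_comm] at hcard
    have := (Nat.le_div_iff_mul_le (by omega)).mpr hcard
    omega

theorem exists_occursAt_greedy (hp : IsConsistent p) (hb : DisjointTranslates p base)
    (hcol : ∀ q ∈ p, q.2 < m) {w a : ℕ} (hwa : w < 2 * a) (hwin : ∀ T, a ≤ numTurns s .A T w)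
    (hN : slotBound a p.toFinset.card ≤ N) : ∃ t j, occursAt p (𝒳 t) (base j) := by
  by_contra! hno
  have hlt : ∀ t j, height p base j (𝒳 t) < p.toFinset.card := fun t j =>
    (height_le_card j _).lt_of_ne fun heq => hno t j (occursAt_of_height_eq heq)
  obtain ⟨T, hlev, hcard⟩ := exists_isAtLevel hp hb hcol hlt hwa hwin hN _ le_rfl
  rw [Nat.sub_self, slotBound] at hcard
  obtain ⟨j, hj⟩ := Finset.card_pos.mp hcard
  exact (hlt T j).not_ge (hlev j hj)

end Phases

section Characterisation

variable {d : ℕ}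

theorem aWins_iff {s : ℕ → Player} (i₀ : Fin d) {w a : ℕ} (hwa : w < 2 * a)
    (hwin : ∀ T, a ≤ numTurns s .A T w) (m : ℕ) (F : List (PatternCode d)) :
    AWins m F Set.univ s ↔ ∃ p ∈ F, (∀ q ∈ p, q.2 < m) ∧ IsConsistent p := by
  constructor
  · rintro ⟨stA, hwins⟩
    obtain ⟨t, p, hp, tr, hocc⟩ := hwins fun _ => none
    refine ⟨p, hp, fun q hq => play_colour_lt _ _ _ _ _ t _ _ (hocc q hq), ?_⟩
    intro q hq q' hq' hcell
    have := hocc q' hq'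
    rwa [← hcell, hocc q hq, Option.some.injEq] at this
  · rintro ⟨p, hp, hcol, hcons⟩
    obtain ⟨base, hb⟩ := exists_disjointTranslates p i₀
    refine ⟨greedyStrategy p base (slotBound a p.toFinset.card), fun stB => ?_⟩
    obtain ⟨t, j, hocc⟩ := exists_occursAt_greedy (stB := stB) hcons hb hcol hwa hwin le_rfl
    exact ⟨t, p, hp, base j, hocc⟩

theorem primrecPred_exists_consistent :
    PrimrecPred fun c : SFTCode d => ∃ p ∈ c.2, (∀ q ∈ p, q.2 < c.1) ∧ IsConsistent p := by
  have hcol : PrimrecRel fun (p : PatternCode d) (m : ℕ) => ∀ q ∈ p, q.2 < m :=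
    PrimrecRel.forall_mem_list (Primrec.nat_lt.comp (Primrec.snd.comp Primrec.fst) Primrec.snd)
  have hagree : PrimrecRel fun (q' q : Cell d × ℕ) => q.1 = q'.1 → q.2 = q'.2 :=
    ((Primrec.eq.comp (Primrec.fst.comp Primrec.snd) (Primrec.fst.comp Primrec.fst)).not.or
      (Primrec.eq.comp (Primrec.snd.comp Primrec.snd) (Primrec.snd.comp Primrec.fst))).of_eq
      fun _ => imp_iff_not_or.symm
  have hcons : PrimrecPred fun p : PatternCode d => IsConsistent p :=
    (hagree.forall_mem_list.swap.forall_mem_list.comp Primrec.id Primrec.id).of_eq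
      fun _ => Iff.rfl
  have hdrawable : PrimrecRel fun (p : PatternCode d) (m : ℕ) =>
      (∀ q ∈ p, q.2 < m) ∧ IsConsistent p :=
    hcol.and (hcons.comp Primrec.fst)
  exact hdrawable.exists_mem_list.comp Primrec.snd Primrec.fst

end Characterisation

end NonAlternatingDomino

/-- Let `s` be a balanced word with frequency `f_A(s) > 1/2`. For
every SFT on `ℤ^d` (with nonempty alphabet, whose forbidden patterns are genuine
nonempty patterns over the alphabet), `A` wins `Γ_s(𝒜, ℱ, ℤ^d)` iff `ℱ ≠ ∅`.
Consequently `NAGAME_s(ℤ^d)` is decidable. -/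
theorem nagame_highFrequency (d : ℕ) (hd : 0 < d) (s : ℕ → Player)
    (hbal : BalancedWord s) (L : ℝ)
    (hfreq : Tendsto (fun n : ℕ => (countA s 0 n : ℝ) / (n + 1)) atTop (𝓝 L))
    (hL : 1 / 2 < L) :
    (∀ (m : ℕ) (F : List (PatternCode d)), 0 < m →
      (∀ p ∈ F, ∀ q ∈ p, q.2 < m) →
      (∀ p ∈ F, ∀ q ∈ p, ∀ q' ∈ p, q.1 = q'.1 → q.2 = q'.2) →
      (∀ p ∈ F, p ≠ []) →
      (AWins m F Set.univ s ↔ F ≠ [])) ∧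
    ComputablePred (NAGame d s) := by
  obtain ⟨w, a, hwa, hwin⟩ := NonAlternatingDomino.exists_window_numTurns_A hbal hfreq hL
  have hwins := NonAlternatingDomino.aWins_iff ⟨0, hd⟩ hwa hwin
  refine ⟨fun m F _ hcol hcons _ => ?_, ?_⟩
  · rw [hwins]
    refine ⟨?_, fun hF => ?_⟩
    · rintro ⟨p, hp, -⟩ rfl
      simp at hp
    · obtain ⟨p, hp⟩ := List.exists_mem_of_ne_nil F hF
      exact ⟨p, hp, hcol p hp, hcons p hp⟩
  · exact NonAlternatingDomino.primrecPred_exists_consistent.computablePred.of_eq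
      fun c => (hwins c.1 c.2).symm
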